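/- arXiv:math/0205252 — 2 statements merged into one kernel-verified Lean document; each statement's English description precedes it below -/
import Mathlib

section
/- Let H be a complex Hilbert space and let U : ℝ → (H →L[ℂ] H) be a strongly continuous one-parameter unitary group: each U(t) is unitary, U(0) = 1, U(s + t) = U(s)·U(t) for all s, t ∈ ℝ, and for each x ∈ H the map t ↦ U(t)x is continuous. Then the set of smooth vectors, D^∞ = { x ∈ H : the map t ↦ U(t)x from ℝ to H is infinitely differentiable (C^∞) }, is dense in H. -/
open MeasureTheory Filter Topology Metric

private lemma norm_gauss_kernel (b : ℝ) (z : ℂ) (s : ℝ) :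
    ‖Complex.exp (-(b:ℂ) * (z - (s:ℂ))^2)‖ =
      Real.exp (b * z.im^2) * Real.exp (-b * (z.re - s)^2) := by
  rw [Complex.norm_exp, ← Real.exp_add]
  congr 1
  have h : ((-(b:ℂ)) * (z - (s:ℂ))^2).re = -b * ((z.re - s)^2 - z.im^2) := by
    simp only [pow_two, Complex.mul_re, Complex.mul_im, Complex.neg_re, Complex.neg_im,
      Complex.ofReal_re, Complex.ofReal_im, Complex.sub_re, Complex.sub_im, neg_zero, zero_mul,
      sub_zero]
  rw [h]
  ring

private lemma integrable_gauss_shift {b : ℝ} (hb : 0 < b) (a : ℝ) :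
    Integrable (fun s : ℝ => Real.exp (-b * (a - s)^2)) := by
  have h := (integrable_exp_neg_mul_sq hb).comp_sub_right a
  refine h.congr (Filter.Eventually.of_forall fun s => ?_)
  simp only
  congr 1
  ring

private lemma integrable_gauss_smul {H : Type*} [NormedAddCommGroup H] [NormedSpace ℂ H]
    {g : ℝ → H} (hgc : Continuous g) {C : ℝ} (hC : ∀ s, ‖g s‖ ≤ C)
    {b : ℝ} (hb : 0 < b) (z : ℂ) :
    Integrable (fun s : ℝ => Complex.exp (-(b:ℂ) * (z - (s:ℂ))^2) • g s) := by
  have hKc : Continuous fun s : ℝ => Complex.exp (-(b:ℂ) * (z - (s:ℂ))^2) :=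
    Complex.continuous_exp.comp
      (continuous_const.mul ((continuous_const.sub Complex.continuous_ofReal).pow 2))
  refine Integrable.mono'
    (((integrable_gauss_shift hb z.re).const_mul (Real.exp (b*z.im^2) * C)))
    ((hKc.smul hgc).aestronglyMeasurable) ?_
  filter_upwards with s
  rw [norm_smul, norm_gauss_kernel]
  have h1 : ‖g s‖ ≤ C := hC s
  have h2 : (0:ℝ) ≤ Real.exp (b * z.im^2) * Real.exp (-b * (z.re - s)^2) := by positivity
  nlinarith [Real.exp_pos (b * z.im^2), Real.exp_pos (-b * (z.re - s)^2), norm_nonneg (g s),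
    mul_le_mul_of_nonneg_left h1 h2]

private lemma differentiable_gauss_conv {H : Type*} [NormedAddCommGroup H] [NormedSpace ℂ H]
    [CompleteSpace H] {g : ℝ → H} (hgc : Continuous g) {C : ℝ} (hC : ∀ s, ‖g s‖ ≤ C)
    {b : ℝ} (hb : 0 < b) :
    Differentiable ℂ (fun z : ℂ => ∫ s : ℝ, Complex.exp (-(b:ℂ) * (z - (s:ℂ))^2) • g s) := by
  intro z₀
  have hC0 : (0:ℝ) ≤ C := le_trans (norm_nonneg (g 0)) (hC 0)
  set B : ℝ := |z₀.im| + 1 with hB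
  have hd : ∀ (z : ℂ) (s : ℝ), HasDerivAt (fun w : ℂ => Complex.exp (-(b:ℂ) * (w - (s:ℂ))^2) • g s)
      ((Complex.exp (-(b:ℂ) * (z - (s:ℂ))^2) * (-(b:ℂ) * (2 * (z - (s:ℂ))))) • g s) z := by
    intro z s
    have h1 : HasDerivAt (fun w : ℂ => w - (s:ℂ)) 1 z := (hasDerivAt_id z).sub_const _
    have h2 := ((HasDerivAt.const_mul (-(b:ℂ)) (h1.pow 2)).cexp).smul_const (g s)
    simp only [Pi.pow_apply] at h2
    convert h2 using 2
    push_cast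
    ring
  have hKc : ∀ z : ℂ, Continuous fun s : ℝ => Complex.exp (-(b:ℂ) * (z - (s:ℂ))^2) := fun z =>
    Complex.continuous_exp.comp
      (continuous_const.mul ((continuous_const.sub Complex.continuous_ofReal).pow 2))
  have main := hasDerivAt_integral_of_dominated_loc_of_deriv_le (μ := volume)
    (F := fun (z : ℂ) (s : ℝ) => Complex.exp (-(b:ℂ) * (z - (s:ℂ))^2) • g s)
    (F' := fun (z : ℂ) (s : ℝ) =>
      (Complex.exp (-(b:ℂ) * (z - (s:ℂ))^2) * (-(b:ℂ) * (2 * (z - (s:ℂ))))) • g s)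
    (x₀ := z₀)
    (bound := fun s =>
      (Real.exp (b*B^2) * (Real.exp b * Real.exp (-(b/2) * (z₀.re - s)^2))) *
        ((2*b) * (|z₀.re - s| + (1+B))) * C)
    (ball_mem_nhds z₀ zero_lt_one) ?_ ?_ ?_ ?_ ?_ ?_
  · exact main.2.differentiableAt
  · exact Filter.Eventually.of_forall fun z =>
      (integrable_gauss_smul hgc hC hb z).aestronglyMeasurable
  · exact integrable_gauss_smul hgc hC hb z₀
  · have hSc : Continuous fun s : ℝ => -(b:ℂ) * (2 * (z₀ - (s:ℂ))) :=
      (continuous_const.mul (continuous_const.mul (continuous_const.sub Complex.continuous_ofReal)))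
    exact (((hKc z₀).mul hSc).smul hgc).aestronglyMeasurable
  · filter_upwards with s
    intro z hz
    have hz1 : ‖z - z₀‖ < 1 := by rwa [mem_ball, dist_eq_norm] at hz
    have him : |z.im| ≤ B := by
      have h1 : |z.im - z₀.im| ≤ ‖z - z₀‖ := by
        simpa using Complex.abs_im_le_norm (z - z₀)
      have h2 : |z.im| - |z₀.im| ≤ |z.im - z₀.im| := abs_sub_abs_le_abs_sub _ _
      rw [hB]; linarith
    have hre : |z.re - z₀.re| ≤ 1 := by
      have h1 : |z.re - z₀.re| ≤ ‖z - z₀‖ := by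
        simpa using Complex.abs_re_le_norm (z - z₀)
      linarith
    have hker : ‖Complex.exp (-(b:ℂ) * (z - (s:ℂ))^2)‖ ≤
        Real.exp (b*B^2) * (Real.exp b * Real.exp (-(b/2) * (z₀.re - s)^2)) := by
      rw [norm_gauss_kernel]
      have e1 : Real.exp (b * z.im^2) ≤ Real.exp (b*B^2) := by
        apply Real.exp_le_exp.mpr
        have h3 : z.im^2 ≤ B^2 := by nlinarith [sq_abs z.im, abs_nonneg z.im]
        nlinarith
      have e2 : Real.exp (-b * (z.re - s)^2) ≤
          Real.exp b * Real.exp (-(b/2) * (z₀.re - s)^2) := by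
        rw [← Real.exp_add]
        apply Real.exp_le_exp.mpr
        have hd2 : (z.re - z₀.re)^2 ≤ 1 := by nlinarith [sq_abs (z.re - z₀.re), abs_nonneg (z.re - z₀.re)]
        have hq : (0:ℝ) ≤ 2*(z.re - s)^2 + 2 - (z₀.re - s)^2 := by
          nlinarith [sq_nonneg (2*(z.re - s) - (z₀.re - s))]
        nlinarith [mul_nonneg hb.le hq]
      exact mul_le_mul e1 e2 (by positivity) (by positivity)
    have hfac : ‖(-(b:ℂ) * (2 * (z - (s:ℂ))))‖ ≤ (2*b) * (|z₀.re - s| + (1+B)) := by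
      rw [norm_mul, norm_mul]
      have h1 : ‖(-(b:ℂ))‖ = b := by
        rw [norm_neg, Complex.norm_real, Real.norm_eq_abs, abs_of_pos hb]
      have h2 : ‖(2:ℂ)‖ = 2 := by norm_num
      have h3 : ‖z - (s:ℂ)‖ ≤ |z₀.re - s| + (1 + B) := by
        have h4 : ‖z₀ - (s:ℂ)‖ ≤ |(z₀ - (s:ℂ)).re| + |(z₀ - (s:ℂ)).im| := by
          simpa using Complex.norm_le_abs_re_add_abs_im (z₀ - (s:ℂ))
        simp only [Complex.sub_re, Complex.sub_im, Complex.ofReal_re, Complex.ofReal_im,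
          sub_zero] at h4
        have h5 : ‖z - (s:ℂ)‖ = ‖(z - z₀) + (z₀ - (s:ℂ))‖ := by rw [sub_add_sub_cancel]
        have h6 : ‖(z - z₀) + (z₀ - (s:ℂ))‖ ≤ ‖z - z₀‖ + ‖z₀ - (s:ℂ)‖ := norm_add_le _ _
        rw [hB]
        have h7 : |z₀.im| ≤ |z₀.im| + 1 := by linarith
        linarith
      rw [h1, h2]
      nlinarith [norm_nonneg (z - (s:ℂ)), abs_nonneg (z₀.re - s), hb.le]
    rw [norm_smul, norm_mul]
    calc ‖Complex.exp (-(b:ℂ) * (z - (s:ℂ))^2)‖ * ‖(-(b:ℂ) * (2 * (z - (s:ℂ))))‖ * ‖g s‖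
        ≤ (Real.exp (b*B^2) * (Real.exp b * Real.exp (-(b/2) * (z₀.re - s)^2))) *
            ((2*b) * (|z₀.re - s| + (1+B))) * C :=
          mul_le_mul (mul_le_mul hker hfac (norm_nonneg _) (by positivity)) (hC s)
            (norm_nonneg _) (by positivity)
      _ = _ := rfl
  · -- bound integrable
    have h1 : Integrable (fun u : ℝ => |u| * Real.exp (-(b/2) * u^2)) := by
      have h1' := (integrable_rpow_mul_exp_neg_mul_sq (half_pos hb)
        (by norm_num : (-1:ℝ) < 1)).abs
      refine h1'.congr (Filter.Eventually.of_forall fun u => ?_)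
      simp [abs_mul, Real.abs_exp, Real.rpow_one]
    have h3 := (integrable_exp_neg_mul_sq (half_pos hb)).const_mul (1+B)
    have h2 : Integrable (fun u : ℝ => (|u| + (1+B)) * Real.exp (-(b/2) * u^2)) := by
      refine (h1.add h3).congr (Filter.Eventually.of_forall fun u => ?_)
      simp only [Pi.add_apply]
      ring
    have h4 : Integrable (fun s : ℝ =>
        (|z₀.re - s| + (1+B)) * Real.exp (-(b/2) * (z₀.re - s)^2)) := by
      have h5 := (h2.comp_neg).comp_sub_right z₀.re
      refine h5.congr (Filter.Eventually.of_forall fun s => ?_)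
      simp only [neg_sub]
    refine ((h4.const_mul
        (Real.exp (b*B^2) * Real.exp b * (2*b) * C)).congr
        (Filter.Eventually.of_forall fun s => ?_))
    ring
  · filter_upwards with s
    intro z _
    exact hd z s

set_option maxHeartbeats 1000000 in
/-- **Density of smooth vectors (Gårding).** For a strongly continuous
one-parameter unitary group `U` on a complex Hilbert space `H`, the set of
vectors `x` such that `t ↦ U t x` is `C^∞` is dense in `H`. -/
theorem smooth_vectors_dense
    (H : Type*) [NormedAddCommGroup H] [InnerProductSpace ℂ H] [CompleteSpace H]
    (U : ℝ → H →L[ℂ] H)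
    (hunitary : ∀ t : ℝ, U t ∈ unitary (H →L[ℂ] H))
    (hU0 : U 0 = 1)
    (hUadd : ∀ s t : ℝ, U (s + t) = U s * U t)
    (hcont : ∀ x : H, Continuous fun t : ℝ => U t x) :
    Dense {x : H | ContDiff ℝ (⊤ : ℕ∞) fun t : ℝ => U t x} := by
  intro x
  set g : ℝ → H := fun t => U t x with hgdef
  have hgc : Continuous g := hcont x
  have hiso : ∀ s, ‖g s‖ = ‖x‖ := by
    intro s
    have h := ContinuousLinearMap.norm_map_of_mem_unitary (hunitary s) x
    exact h
  have hCb : ∀ s, ‖g s‖ ≤ ‖x‖ := fun s => (hiso s).le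
  have h0 : g 0 = x := by simp [hgdef, hU0]
  -- the gaussian-regularized vectors
  set Fc : ℝ → ℂ → H := fun b z => ∫ s : ℝ, Complex.exp (-(b:ℂ) * (z - (s:ℂ))^2) • g s
    with hFcdef
  set v : ℝ → H := fun b => ((Real.sqrt (b/Real.pi) : ℝ) : ℂ) • Fc b 0 with hvdef
  -- each v b (for b ≥ 1) is a smooth (indeed analytic) vector
  have hmem : ∀ b : ℝ, 1 ≤ b → v b ∈ {x : H | ContDiff ℝ (⊤ : ℕ∞) fun t : ℝ => U t x} := by
    intro b hb1
    have hb : (0:ℝ) < b := lt_of_lt_of_le one_pos hb1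
    -- U t (Fc b 0) = Fc b t
    have hcomm : ∀ t : ℝ, U t (Fc b 0) = Fc b (t:ℂ) := by
      intro t
      have hint := integrable_gauss_smul hgc hCb hb (0:ℂ)
      show U t (∫ s : ℝ, Complex.exp (-(b:ℂ) * ((0:ℂ) - (s:ℂ))^2) • g s) =
        ∫ s : ℝ, Complex.exp (-(b:ℂ) * (((t:ℝ):ℂ) - (s:ℂ))^2) • g s
      rw [← ContinuousLinearMap.integral_comp_comm _ hint]
      have heq : (fun s : ℝ => U t (Complex.exp (-(b:ℂ) * ((0:ℂ) - (s:ℂ))^2) • g s)) =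
          fun s : ℝ => Complex.exp (-(b:ℂ) * (((t:ℝ):ℂ) - ((s + t : ℝ):ℂ))^2) • g (s + t) := by
        funext s
        rw [_root_.map_smul]
        have e1 : Complex.exp (-(b:ℂ) * ((0:ℂ) - (s:ℂ))^2) =
            Complex.exp (-(b:ℂ) * (((t:ℝ):ℂ) - ((s + t : ℝ):ℂ))^2) := by
          congr 1
          push_cast
          ring
        have e2 : U t (g s) = g (s + t) := by
          show U t (U s x) = U (s + t) x
          rw [add_comm s t, hUadd]
          rfl
        rw [e1, e2]
      rw [heq]
      exact integral_add_right_eq_self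
        (fun u : ℝ => Complex.exp (-(b:ℂ) * (((t:ℝ):ℂ) - (u:ℂ))^2) • g u) t
    -- analytic dependence
    have hFd : Differentiable ℂ (Fc b) := differentiable_gauss_conv hgc hCb hb
    have hFr : ContDiff ℝ (⊤ : ℕ∞) fun t : ℝ => Fc b (t:ℂ) := by
      have han : AnalyticOnNhd ℝ (fun t : ℝ => Fc b (t:ℂ)) Set.univ := by
        intro t _
        exact ((hFd.analyticAt ((t:ℝ):ℂ)).restrictScalars).comp
          (Complex.ofRealCLM.analyticAt t)
      exact han.contDiff
    show ContDiff ℝ (⊤ : ℕ∞) fun t : ℝ => U t (v b)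
    have hfun : (fun t : ℝ => U t (v b)) =
        fun t : ℝ => ((Real.sqrt (b/Real.pi) : ℝ) : ℂ) • Fc b (t:ℂ) := by
      funext t
      show U t (((Real.sqrt (b/Real.pi) : ℝ) : ℂ) • Fc b 0) = _
      rw [_root_.map_smul, hcomm t]
    rw [hfun]
    exact hFr.const_smul _
  -- convergence  v b → x  as b → ∞
  have hsqrt_atTop : Tendsto Real.sqrt atTop atTop := by
    apply tendsto_atTop_atTop.mpr
    intro b
    refine ⟨b^2, fun a ha => ?_⟩
    calc b ≤ |b| := le_abs_self b
      _ = Real.sqrt (b^2) := (Real.sqrt_sq_eq_abs b).symm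
      _ ≤ Real.sqrt a := Real.sqrt_le_sqrt ha
  set J : ℝ → H := fun b => ∫ u : ℝ,
      ((Real.exp (-u^2) : ℝ) : ℂ) • (g (u / Real.sqrt b) - x) with hJdef
  have hJ : Tendsto J atTop (𝓝 0) := by
    have := tendsto_integral_filter_of_dominated_convergence (μ := volume) (l := atTop)
      (F := fun (b : ℝ) (u : ℝ) => ((Real.exp (-u^2) : ℝ) : ℂ) • (g (u / Real.sqrt b) - x))
      (f := fun _ : ℝ => (0 : H))
      (bound := fun u : ℝ => Real.exp (-u^2) * (2 * ‖x‖))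
      ?_ ?_ ?_ ?_
    · rw [hJdef]
      simpa using this
    · filter_upwards with b
      have : Continuous fun u : ℝ => ((Real.exp (-u^2) : ℝ) : ℂ) • (g (u / Real.sqrt b) - x) := by
        apply Continuous.smul
        · exact Complex.continuous_ofReal.comp (Real.continuous_exp.comp (continuous_pow 2).neg)
        · exact (hgc.comp (continuous_id.div_const _)).sub continuous_const
      exact this.aestronglyMeasurable
    · filter_upwards with b
      filter_upwards with u
      rw [norm_smul]
      have h1 : ‖((Real.exp (-u^2) : ℝ) : ℂ)‖ = Real.exp (-u^2) := by
        rw [Complex.norm_real, Real.norm_eq_abs, abs_of_pos (Real.exp_pos _)]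
      rw [h1]
      have h2 : ‖g (u / Real.sqrt b) - x‖ ≤ 2 * ‖x‖ := by
        calc ‖g (u / Real.sqrt b) - x‖ ≤ ‖g (u / Real.sqrt b)‖ + ‖x‖ := norm_sub_le _ _
          _ = 2 * ‖x‖ := by rw [hiso]; ring
      have h3 : (0:ℝ) < Real.exp (-u^2) := Real.exp_pos _
      nlinarith
    · have h4 : Integrable (fun u : ℝ => Real.exp (-(1:ℝ) * u^2)) :=
        integrable_exp_neg_mul_sq one_pos
      refine (h4.mul_const (2 * ‖x‖)).congr (Filter.Eventually.of_forall fun u => ?_)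
      norm_num
    · filter_upwards with u
      have hA : Tendsto (fun b : ℝ => u / Real.sqrt b) atTop (𝓝 0) :=
        Tendsto.div_atTop tendsto_const_nhds hsqrt_atTop
      have hB : Tendsto (fun b : ℝ => g (u / Real.sqrt b) - x) atTop (𝓝 0) := by
        have := ((hgc.tendsto 0).comp hA).sub_const x
        rwa [h0, sub_self] at this
      have := hB.const_smul (((Real.exp (-u^2) : ℝ) : ℂ))
      simpa using this
  -- identify v b - x with a multiple of J b
  have hkey : ∀ᶠ b : ℝ in atTop, v b - x = ((Real.sqrt Real.pi)⁻¹ : ℝ) • J b := by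
    filter_upwards [eventually_ge_atTop (1:ℝ)] with b hb1
    have hb : (0:ℝ) < b := lt_of_lt_of_le one_pos hb1
    have hsb : (0:ℝ) < Real.sqrt b := Real.sqrt_pos.mpr hb
    have hπ : (0:ℝ) < Real.pi := Real.pi_pos
    -- step 1: Fc b 0 written with real gaussian
    have hW : Fc b 0 = ∫ s : ℝ, ((Real.exp (-b * s^2) : ℝ) : ℂ) • g s := by
      show (∫ s : ℝ, Complex.exp (-(b:ℂ) * ((0:ℂ) - (s:ℂ))^2) • g s) = _
      congr 1
      funext s
      congr 1
      rw [Complex.ofReal_exp]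
      congr 1
      push_cast
      ring
    have hint1 : Integrable (fun s : ℝ => ((Real.exp (-b * s^2) : ℝ) : ℂ) • g s) := by
      have := integrable_gauss_smul hgc hCb hb (0:ℂ)
      refine this.congr (Filter.Eventually.of_forall fun s => ?_)
      show Complex.exp (-(b:ℂ) * ((0:ℂ) - (s:ℂ))^2) • g s =
        ((Real.exp (-b * s^2) : ℝ) : ℂ) • g s
      congr 1
      rw [Complex.ofReal_exp]
      congr 1
      push_cast
      ring
    have hint2 : Integrable (fun s : ℝ => ((Real.exp (-b * s^2) : ℝ) : ℂ) • x) :=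
      ((integrable_exp_neg_mul_sq hb).ofReal).smul_const x
    -- step 2: subtract
    have hsub : v b - x =
        ((Real.sqrt (b/Real.pi) : ℝ) : ℂ) •
          ∫ s : ℝ, ((Real.exp (-b * s^2) : ℝ) : ℂ) • (g s - x) := by
      have hsplit : (fun s : ℝ => ((Real.exp (-b * s^2) : ℝ) : ℂ) • (g s - x)) =
          fun s : ℝ => ((Real.exp (-b * s^2) : ℝ) : ℂ) • g s
            - ((Real.exp (-b * s^2) : ℝ) : ℂ) • x := by
        funext s; rw [smul_sub]
      have h9 : (∫ s : ℝ, ((Real.exp (-b * s^2) : ℝ) : ℂ) • (g s - x))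
          = Fc b 0 - ((Real.sqrt (Real.pi / b) : ℝ) : ℂ) • x := by
        rw [hsplit, integral_sub hint1 hint2, integral_smul_const,
          show (∫ s : ℝ, ((Real.exp (-b * s^2) : ℝ) : ℂ))
            = ((∫ s : ℝ, Real.exp (-b * s^2) : ℝ) : ℂ) from integral_ofReal,
          integral_gaussian, ← hW]
      rw [h9, smul_sub, smul_smul, ← Complex.ofReal_mul,
        ← Real.sqrt_mul (by positivity : (0:ℝ) ≤ b / Real.pi),
        show b / Real.pi * (Real.pi / b) = 1 by field_simp, Real.sqrt_one,
        Complex.ofReal_one, one_smul]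
    -- step 3: substitution s = u / √b
    have hchg : (∫ s : ℝ, ((Real.exp (-b * s^2) : ℝ) : ℂ) • (g s - x))
        = (Real.sqrt b)⁻¹ • J b := by
      have h5 := MeasureTheory.Measure.integral_comp_div
        (fun s : ℝ => ((Real.exp (-b * s^2) : ℝ) : ℂ) • (g s - x)) (Real.sqrt b)
      have h6 : (fun u : ℝ => ((Real.exp (-b * (u / Real.sqrt b)^2) : ℝ) : ℂ) •
          (g (u / Real.sqrt b) - x)) =
          fun u : ℝ => ((Real.exp (-u^2) : ℝ) : ℂ) • (g (u / Real.sqrt b) - x) := by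
        funext u
        congr 3
        rw [div_pow, Real.sq_sqrt hb.le]
        field_simp
      rw [h6] at h5
      rw [abs_of_pos hsb] at h5
      show (∫ s : ℝ, ((Real.exp (-b * s^2) : ℝ) : ℂ) • (g s - x)) =
        (Real.sqrt b)⁻¹ • ∫ u : ℝ, ((Real.exp (-u^2) : ℝ) : ℂ) • (g (u / Real.sqrt b) - x)
      rw [h5, smul_smul, inv_mul_cancel₀ (ne_of_gt hsb), one_smul]
    rw [hsub, hchg, Complex.coe_smul, smul_smul]
    congr 1
    rw [Real.sqrt_div hb.le]
    have hsπ : (0:ℝ) < Real.sqrt Real.pi := Real.sqrt_pos.mpr hπ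
    field_simp
  have hvt : Tendsto v atTop (𝓝 x) := by
    have h7 : Tendsto (fun b => ((Real.sqrt Real.pi)⁻¹ : ℝ) • J b) atTop (𝓝 0) := by
      have := hJ.const_smul ((Real.sqrt Real.pi)⁻¹ : ℝ)
      simpa using this
    have h8 : Tendsto (fun b => v b - x) atTop (𝓝 0) := h7.congr' (hkey.mono fun b hb => hb.symm)
    have := h8.add_const x
    simpa using this
  exact mem_closure_of_tendsto hvt (eventually_atTop.mpr ⟨1, hmem⟩)
end

section
/- Let H be a complex Hilbert space and let U : ℝ → (H →L[ℂ] H) be a strongly continuous one-parameter unitary group: each U(t) is unitary, U(0) = 1, U(s + t) = U(s)·U(t) for all s, t ∈ ℝ, and for each x ∈ H the map t ↦ U(t)x is continuous. Define the unbounded operator A with domain D(A) = { x ∈ H : the map t ↦ U(t)x is differentiable at 0 } and A x = −i · (d/dt)|_{t=0} U(t)x. Then: (1) D(A) is dense in H; (2) A is self-adjoint, i.e. A equals its (unbounded) adjoint A†; and (3) for every t ∈ ℝ and x ∈ D(A), U(t)x ∈ D(A) and A(U(t)x) = U(t)(A x). -/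
/-!
The group law turns differentiability of `t ↦ U t x` at `0` into differentiability at every
time, and makes the domain invariant under `U t`. The averages `c⁻¹ • ∫₀ᶜ U s x` lie in the
domain and tend to `x`, so the domain is dense. Unitarity makes `⟪U t x, U t y⟫` constant;
differentiating at `0` shows that `A` is symmetric. Conversely, if `y` is in the domain of `A†`,
then for `v` in the dense domain of `A` the scalar function `t ↦ ⟪v, U t y⟫` has derivative
`⟪v, U t (i • A† y)⟫`, which forces `U t y = y + ∫₀ᵗ U s (i • A† y)`; hence `y` is in the
domain of `A`, and `A† = A`.
-/

open Filter Topology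

local notation "⟪" x ", " y "⟫" => inner ℂ x y

section OrbitCalculus

variable {E : Type*} [NormedAddCommGroup E] [NormedSpace ℂ E] {U : ℝ → E →L[ℂ] E}

theorem hasDerivAt_orbit_of_hasDerivAt_zero (hUadd : ∀ s t : ℝ, U (s + t) = U s * U t)
    {x d : E} (h : HasDerivAt (fun t : ℝ => U t x) d 0) (t : ℝ) :
    HasDerivAt (fun s : ℝ => U s x) (U t d) t := by
  have hshift : HasDerivAt (fun s : ℝ => U t (U (s - t) x)) (U t d) t :=
    ((U t).restrictScalars ℝ).hasFDerivAt.comp_hasDerivAt t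
      (HasDerivAt.comp_sub_const t t (by rwa [sub_self]))
  convert hshift using 2 with s
  rw [← mul_apply_eq_comp, ← hUadd, add_sub_cancel]

theorem hasDerivAt_orbit_map_of_hasDerivAt_zero (hUadd : ∀ s t : ℝ, U (s + t) = U s * U t)
    {x d : E} (h : HasDerivAt (fun t : ℝ => U t x) d 0) (t : ℝ) :
    HasDerivAt (fun s : ℝ => U s (U t x)) (U t d) 0 := by
  convert ((U t).restrictScalars ℝ).hasFDerivAt.comp_hasDerivAt 0 h using 2 with s
  simp only [Function.comp_apply, ContinuousLinearMap.coe_restrictScalars',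
    ← mul_apply_eq_comp, ← hUadd, add_comm]
  rfl

theorem hasDerivAt_orbit_intervalIntegral [CompleteSpace E]
    (hUadd : ∀ s t : ℝ, U (s + t) = U s * U t) {x : E} (hx : Continuous fun t : ℝ => U t x)
    (c : ℝ) :
    HasDerivAt (fun t : ℝ => U t (∫ s in (0 : ℝ)..c, U s x)) (U c x - U 0 x) 0 := by
  have hF := hx.integral_hasStrictDerivAt 0
  have horbit : ∀ t : ℝ, U t (∫ s in (0 : ℝ)..c, U s x)
      = (∫ s in (0 : ℝ)..(t + c), U s x) - ∫ s in (0 : ℝ)..t, U s x := by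
    intro t
    rw [← (U t).intervalIntegral_comp_comm (hx.intervalIntegrable 0 c)]
    simp only [← mul_apply_eq_comp, ← hUadd]
    rw [intervalIntegral.integral_comp_add_left (fun s => U s x) t, add_zero,
      intervalIntegral.integral_interval_sub_left (hx.intervalIntegrable _ _)
        (hx.intervalIntegrable _ _)]
  simp only [horbit]
  exact ((hF (0 + c)).hasDerivAt.comp_add_const 0 c).sub (hF 0).hasDerivAt |>.congr_deriv
    (by rw [zero_add])

theorem dense_setOf_hasDerivAt_orbit [CompleteSpace E] (hU0 : U 0 = 1)
    (hUadd : ∀ s t : ℝ, U (s + t) = U s * U t) (hcont : ∀ x : E, Continuous fun t : ℝ => U t x) :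
    Dense {x : E | ∃ d : E, HasDerivAt (fun t : ℝ => U t x) d 0} := by
  intro x
  have hmean : Tendsto (fun c : ℝ => c⁻¹ • ∫ s in (0 : ℝ)..c, U s x) (𝓝[≠] 0) (𝓝 x) := by
    simpa [hU0, slope_fun_def] using
      hasDerivAt_iff_tendsto_slope.mp ((hcont x).integral_hasStrictDerivAt 0 0).hasDerivAt
  refine mem_closure_of_tendsto hmean (Eventually.of_forall fun c => ?_)
  refine ⟨c⁻¹ • (U c x - U 0 x), ?_⟩
  simpa only [ContinuousLinearMap.map_smul_of_tower] using
    (hasDerivAt_orbit_intervalIntegral hUadd (hcont x) c).fun_const_smul c⁻¹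

variable {A : E →ₗ.[ℂ] E}

theorem generator_apply_eq_of_hasDerivAt
    (hAval : ∀ x : A.domain, HasDerivAt (fun t : ℝ => U t (x : E)) (Complex.I • A x) 0)
    (x : A.domain) {d : E} (h : HasDerivAt (fun t : ℝ => U t (x : E)) (Complex.I • d) 0) :
    A x = d :=
  smul_right_injective E Complex.I_ne_zero ((hAval x).unique h)

theorem exists_generator_map_eq_map_generator (hUadd : ∀ s t : ℝ, U (s + t) = U s * U t)
    (hdom : ∀ x : E, x ∈ A.domain ↔ ∃ d : E, HasDerivAt (fun t : ℝ => U t x) d 0)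
    (hAval : ∀ x : A.domain, HasDerivAt (fun t : ℝ => U t (x : E)) (Complex.I • A x) 0)
    (t : ℝ) (x : A.domain) :
    ∃ hx : U t (x : E) ∈ A.domain, A ⟨U t (x : E), hx⟩ = U t (A x) := by
  have hd : HasDerivAt (fun s : ℝ => U s (U t (x : E))) (Complex.I • U t (A x)) 0 := by
    simpa only [map_smul] using hasDerivAt_orbit_map_of_hasDerivAt_zero hUadd (hAval x) t
  have hx : U t (x : E) ∈ A.domain := (hdom _).2 ⟨_, hd⟩
  exact ⟨hx, generator_apply_eq_of_hasDerivAt hAval ⟨_, hx⟩ hd⟩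

end OrbitCalculus

section UnitaryGroup

variable {H : Type*} [NormedAddCommGroup H] [InnerProductSpace ℂ H] [CompleteSpace H]
  {U : ℝ → H →L[ℂ] H}

theorem inner_apply_neg_left (hunitary : ∀ t : ℝ, U t ∈ unitary (H →L[ℂ] H)) (hU0 : U 0 = 1)
    (hUadd : ∀ s t : ℝ, U (s + t) = U s * U t) (t : ℝ) (x y : H) :
    ⟪U (-t) x, y⟫ = ⟪x, U t y⟫ := by
  rw [← (U t).inner_map_map_of_mem_unitary (hunitary t), ← mul_apply_eq_comp, ← hUadd,
    add_neg_cancel, hU0, one_apply_eq_self]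

theorem inner_add_inner_eq_zero_of_hasDerivAt_orbit
    (hunitary : ∀ t : ℝ, U t ∈ unitary (H →L[ℂ] H)) (hU0 : U 0 = 1) {x y dx dy : H}
    (hx : HasDerivAt (fun t : ℝ => U t x) dx 0)
    (hy : HasDerivAt (fun t : ℝ => U t y) dy 0) :
    ⟪x, dy⟫ + ⟪dx, y⟫ = 0 := by
  have hconst : (fun t : ℝ => ⟪U t x, U t y⟫) = fun _ => ⟪x, y⟫ := by
    funext t
    exact (U t).inner_map_map_of_mem_unitary (hunitary t) x y
  have hd := hx.inner ℂ hy
  simp only [hconst, hU0, one_apply_eq_self] at hd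
  exact hd.unique (hasDerivAt_const 0 _)

theorem hasDerivAt_of_hasDerivAt_inner {f g : ℝ → H} {D : Set H}
    (hD : Dense D) (hg : Continuous g)
    (h : ∀ v ∈ D, ∀ t : ℝ, HasDerivAt (fun t : ℝ => ⟪v, f t⟫) ⟪v, g t⟫ t) (t : ℝ) :
    HasDerivAt f (g t) t := by
  have hf : f = fun τ => f 0 + ∫ s in (0 : ℝ)..τ, g s := by
    funext τ
    refine hD.eq_of_inner_right ℂ fun v hv => ?_
    have hFTC := intervalIntegral.integral_eq_sub_of_hasDerivAt (fun s _ => h v hv s)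
      ((continuous_const.inner hg).intervalIntegrable 0 τ)
    have hswap := (innerSL ℂ v).intervalIntegral_comp_comm
      (hg.intervalIntegrable (μ := MeasureTheory.volume) 0 τ)
    simp only [innerSL_apply_apply] at hswap
    rw [inner_add_right, ← hswap, hFTC, add_sub_cancel]
  rw [hf]
  exact (hg.integral_hasStrictDerivAt 0 t).hasDerivAt.const_add _

variable {A : H →ₗ.[ℂ] H}

theorem generator_isFormalAdjoint (hunitary : ∀ t : ℝ, U t ∈ unitary (H →L[ℂ] H))
    (hU0 : U 0 = 1)
    (hAval : ∀ x : A.domain, HasDerivAt (fun t : ℝ => U t (x : H)) (Complex.I • A x) 0) :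
    A.IsFormalAdjoint A := by
  intro x y
  have hskew := inner_add_inner_eq_zero_of_hasDerivAt_orbit hunitary hU0 (hAval x) (hAval y)
  rw [inner_smul_right, inner_smul_left, Complex.conj_I] at hskew
  exact mul_left_cancel₀ Complex.I_ne_zero (by linear_combination -hskew)

theorem hasDerivAt_inner_orbit_of_mem_adjoint_domain
    (hunitary : ∀ t : ℝ, U t ∈ unitary (H →L[ℂ] H)) (hU0 : U 0 = 1)
    (hUadd : ∀ s t : ℝ, U (s + t) = U s * U t)
    (hdom : ∀ x : H, x ∈ A.domain ↔ ∃ d : H, HasDerivAt (fun t : ℝ => U t x) d 0)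
    (hAval : ∀ x : A.domain, HasDerivAt (fun t : ℝ => U t (x : H)) (Complex.I • A x) 0)
    (hdense : Dense (A.domain : Set H)) (v : A.domain) (y : A.adjoint.domain) (t : ℝ) :
    HasDerivAt (fun t : ℝ => ⟪(v : H), U t (y : H)⟫)
      ⟪(v : H), U t (Complex.I • A.adjoint y)⟫ t := by
  have hback : HasDerivAt (fun s : ℝ => U (-s) (v : H)) (-U (-t) (Complex.I • A v)) t := by
    simpa [Function.comp_def] using
      (hasDerivAt_orbit_of_hasDerivAt_zero hUadd (hAval v) (-t)).scomp t (hasDerivAt_neg t)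
  obtain ⟨hmem, hcomm⟩ := exists_generator_map_eq_map_generator hUadd hdom hAval (-t) v
  have hadj : ⟪A ⟨_, hmem⟩, (y : H)⟫ = ⟪U (-t) (v : H), A.adjoint y⟫ := by
    rw [← inner_conj_symm, ← LinearPMap.adjoint_isFormalAdjoint hdense y ⟨_, hmem⟩,
      inner_conj_symm]
  simp only [← inner_apply_neg_left hunitary hU0 hUadd]
  refine (hback.inner ℂ (hasDerivAt_const t (y : H))).congr_deriv ?_
  rw [inner_zero_right, zero_add, map_smul, inner_neg_left, inner_smul_left, Complex.conj_I,
    ← hcomm, hadj, inner_smul_right, neg_mul, neg_neg]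

theorem adjoint_le_generator (hunitary : ∀ t : ℝ, U t ∈ unitary (H →L[ℂ] H))
    (hU0 : U 0 = 1) (hUadd : ∀ s t : ℝ, U (s + t) = U s * U t)
    (hcont : ∀ x : H, Continuous fun t : ℝ => U t x)
    (hdom : ∀ x : H, x ∈ A.domain ↔ ∃ d : H, HasDerivAt (fun t : ℝ => U t x) d 0)
    (hAval : ∀ x : A.domain, HasDerivAt (fun t : ℝ => U t (x : H)) (Complex.I • A x) 0)
    (hdense : Dense (A.domain : Set H)) :
    A.adjoint ≤ A := by
  refine LinearPMap.le_of_eqLocus_ge fun y hy => ?_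
  have hyd : HasDerivAt (fun t : ℝ => U t y) (U 0 (Complex.I • A.adjoint ⟨y, hy⟩)) 0 :=
    hasDerivAt_of_hasDerivAt_inner hdense (hcont _) (fun v hv t =>
      hasDerivAt_inner_orbit_of_mem_adjoint_domain hunitary hU0 hUadd hdom hAval hdense
        ⟨v, hv⟩ ⟨y, hy⟩ t) 0
  rw [hU0, one_apply_eq_self] at hyd
  have hyA : y ∈ A.domain := (hdom y).2 ⟨_, hyd⟩
  exact show ∃ _ _, _ from
    ⟨hy, hyA, (generator_apply_eq_of_hasDerivAt hAval ⟨y, hyA⟩ hyd).symm⟩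

end UnitaryGroup

/-- **Stone's theorem (Hilbert space version).** Let `U` be a strongly continuous
one-parameter unitary group on a complex Hilbert space `H`, and let `A` be the
unbounded operator with domain `{x | t ↦ U t x is differentiable at 0}` and
`A x = -i (d/dt)|₀ U t x` (equivalently, `(d/dt)|₀ U t x = i • A x`). Then `A` is
densely defined, self-adjoint, and commutes with the group. -/
theorem stone_theorem_generator
    (H : Type*) [NormedAddCommGroup H] [InnerProductSpace ℂ H] [CompleteSpace H]
    (U : ℝ → H →L[ℂ] H)
    (hunitary : ∀ t : ℝ, U t ∈ unitary (H →L[ℂ] H))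
    (hU0 : U 0 = 1)
    (hUadd : ∀ s t : ℝ, U (s + t) = U s * U t)
    (hcont : ∀ x : H, Continuous fun t : ℝ => U t x)
    (A : H →ₗ.[ℂ] H)
    (hdom : ∀ x : H, x ∈ A.domain ↔ ∃ d : H, HasDerivAt (fun t : ℝ => U t x) d 0)
    (hAval : ∀ x : A.domain, HasDerivAt (fun t : ℝ => U t (x : H)) (Complex.I • A x) 0) :
    Dense (A.domain : Set H) ∧ IsSelfAdjoint A ∧
      ∀ (t : ℝ) (x : A.domain),
        ∃ hx : U t (x : H) ∈ A.domain, A ⟨U t (x : H), hx⟩ = U t (A x) := by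
  have hdense : Dense (A.domain : Set H) := by
    rw [Set.ext hdom]
    exact dense_setOf_hasDerivAt_orbit hU0 hUadd hcont
  refine ⟨hdense, ?_, exists_generator_map_eq_map_generator hUadd hdom hAval⟩
  exact le_antisymm (adjoint_le_generator hunitary hU0 hUadd hcont hdom hAval hdense)
    ((generator_isFormalAdjoint hunitary hU0 hAval).le_adjoint hdense)
end
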